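/- Let ν, s₀ be complex numbers and suppose q(s) = ε/(s - s₀) + Σ_{k ≥ 0} c_k·(s - s₀)^k, with ε ∈ {1, -1}, is given by a convergent Laurent series on a punctured disk {s : 0 < |s - s₀| < δ} and satisfies the Painlevé II equation q''(s) = s·q(s) + 2·q(s)³ - ν there. Define H(s) := (q'(s))² - s·q(s)² - q(s)⁴ + 2ν·q(s). Then (s - s₀)·H(s) → 1 as s → s₀ (H has a simple pole at s₀ with residue 1). Consequently, if ε = 1 then H - q has a removable singularity at s₀, i.e., H(s) - q(s) extends to an analytic function on the full disk {s : |s - s₀| < δ}. -/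

import Mathlib

/-!
Write `t = s - s₀` and `q = ε/t + h` with `h` holomorphic on the disk. The `t⁻⁴` terms of `q'²` and
`q⁴` cancel, so `D = t⁴H - t³` is a polynomial in `t`, `s`, `h`, `h'` and hence holomorphic. Along
solutions of PII one has `H' = -q²`, which, since `ε² = 1`, becomes the Euler-type equation
`t D' - 4D = t⁴ g` with `g = -(2εh + th²)` holomorphic. Dividing out one factor of `t` at a time
gives `D = t⁴u` with `u` holomorphic, i.e. `H = 1/t + u`: so `tH → 1`, and `H - q = u - h`
if `ε = 1`.
-/

open Complex Filter

/-- The Painlevé II Hamiltonian `H = (q')² - s q² - q⁴ + 2νq`. -/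
noncomputable def PIIHamiltonian (ν : ℂ) (q q' : ℂ → ℂ) (s : ℂ) : ℂ :=
  (q' s) ^ 2 - s * (q s) ^ 2 - (q s) ^ 4 + 2 * ν * q s

open Topology Metric

theorem hasDerivAt_PIIHamiltonian {ν s : ℂ} {q q' q'' : ℂ → ℂ} (hq : HasDerivAt q (q' s) s)
    (hq' : HasDerivAt q' (q'' s) s) (hPII : q'' s = s * q s + 2 * q s ^ 3 - ν) :
    HasDerivAt (PIIHamiltonian ν q q') (-q s ^ 2) s := by
  have := (((hq'.fun_pow 2).fun_sub ((hasDerivAt_id' s).fun_mul (hq.fun_pow 2))).fun_sub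
    (hq.fun_pow 4)).fun_add (hq.const_mul (2 * ν))
  refine this.congr_deriv ?_
  rw [hPII]
  ring

theorem ContinuousAt.eq_of_eqOn_diff_singleton {X Y : Type*} [TopologicalSpace X]
    [TopologicalSpace Y] [T2Space Y] {f g : X → Y} {U : Set X} {z₀ : X} [(𝓝[≠] z₀).NeBot]
    (hU : U ∈ 𝓝 z₀) (hf : ContinuousAt f z₀) (hg : ContinuousAt g z₀)
    (hfg : Set.EqOn f g (U \ {z₀})) : f z₀ = g z₀ :=
  ((hf.eventuallyEq_nhds_iff_eventuallyEq_nhdsNE hg).1 <| eventually_nhdsWithin_iff.2 <|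
    mem_of_superset hU fun _ hzU hz => hfg ⟨hzU, hz⟩).eq_of_nhds

theorem exists_eq_sub_pow_mul_of_sub_mul_deriv_sub_eq {U : Set ℂ} {z₀ : ℂ}
    (hU : IsOpen U) (hz₀ : z₀ ∈ U) {g : ℂ → ℂ} (hg : ContinuousAt g z₀) (n : ℕ) {f : ℂ → ℂ}
    (hf : DifferentiableOn ℂ f U)
    (hfg : ∀ z ∈ U, z ≠ z₀ → (z - z₀) * deriv f z - (n : ℂ) * f z = (z - z₀) ^ n * g z) :
    ∃ u : ℂ → ℂ, DifferentiableOn ℂ u U ∧ ∀ z ∈ U, f z = (z - z₀) ^ n * u z := by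
  induction n generalizing f with
  | zero => exact ⟨f, hf, fun z _ => by simp⟩
  | succ n ih =>
    have hU₀ : U ∈ 𝓝 z₀ := hU.mem_nhds hz₀
    -- at `z₀` the identity reads `-(n + 1) f z₀ = 0`, after passing to the limit
    have hf₀ : f z₀ = 0 := by
      have := ContinuousAt.eq_of_eqOn_diff_singleton hU₀
        (f := fun z => (n + 1 : ℂ) * f z)
        (g := fun z => (z - z₀) * deriv f z - (z - z₀) ^ (n + 1) * g z)
        ((hf.continuousOn.continuousAt hU₀).const_mul _) ?_ ?_
      · simpa [Nat.cast_add_one_ne_zero] using this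
      · have := ((hf.deriv hU).continuousOn.continuousAt hU₀)
        fun_prop
      · rintro z ⟨hzU, hz⟩
        have := hfg z hzU hz
        push_cast at this
        linear_combination -this
    set f₁ := dslope f z₀
    have hf₁ : DifferentiableOn ℂ f₁ U := (Complex.differentiableOn_dslope hU₀).2 hf
    have hff₁ : ∀ z, f z = (z - z₀) * f₁ z := fun z => (sub_smul_dslope_of_zero hf₀ z).symm
    have hderiv : ∀ z ∈ U, deriv f z = f₁ z + (z - z₀) * deriv f₁ z := by
      intro z hz
      have := ((hasDerivAt_id' z).sub_const z₀).fun_mul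
        ((hf₁ z hz).differentiableAt (hU.mem_nhds hz)).hasDerivAt
      rw [show f = fun z => (z - z₀) * f₁ z from funext hff₁, this.deriv, one_mul]
    obtain ⟨u, hu, hf₁u⟩ := ih hf₁ fun z hzU hz => by
      have := hfg z hzU hz
      rw [hderiv z hzU, hff₁ z] at this
      refine mul_left_cancel₀ (sub_ne_zero.2 hz) ?_
      push_cast at this
      linear_combination this
    exact ⟨u, hu, fun z hz => by rw [hff₁, hf₁u z hz]; ring⟩

theorem le_radius_ofScalars_of_summable {𝕜 : Type*} [RCLike 𝕜] {c : ℕ → 𝕜} {δ : ℝ}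
    (hc : ∀ z : 𝕜, 0 < ‖z‖ → ‖z‖ < δ → Summable fun k => c k * z ^ k) :
    ENNReal.ofReal δ ≤ (FormalMultilinearSeries.ofScalars 𝕜 c).radius := by
  refine ENNReal.le_of_forall_nnreal_lt fun r hr => ?_
  rcases eq_or_ne r 0 with rfl | hr₀
  · simp
  have hrδ : (r : ℝ) < δ := by
    rw [← ENNReal.ofReal_coe_nnreal] at hr
    exact (ENNReal.ofReal_lt_ofReal_iff_of_nonneg r.2).1 hr
  have hnorm : ‖((r : ℝ) : 𝕜)‖ = r := by simp
  refine (FormalMultilinearSeries.ofScalars 𝕜 c).le_radius_of_tendsto (l := 0) ?_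
  have := (hc (r : ℝ) (by rw [hnorm]; positivity) (by rwa [hnorm])).tendsto_atTop_zero.norm
  simpa [FormalMultilinearSeries.ofScalars_norm] using this

theorem exists_differentiableOn_ball_hasSum {𝕜 : Type*} [RCLike 𝕜] {c : ℕ → 𝕜} {s₀ : 𝕜}
    {δ : ℝ} (hδ : 0 < δ)
    (hc : ∀ s, 0 < ‖s - s₀‖ → ‖s - s₀‖ < δ → Summable fun k => c k * (s - s₀) ^ k) :
    ∃ f : 𝕜 → 𝕜, DifferentiableOn 𝕜 f (ball s₀ δ) ∧
      ∀ s ∈ ball s₀ δ, HasSum (fun k => c k * (s - s₀) ^ k) (f s) := by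
  set p := FormalMultilinearSeries.ofScalars 𝕜 c
  have hp : ENNReal.ofReal δ ≤ p.radius :=
    le_radius_ofScalars_of_summable fun z hz hzδ => by
      simpa using hc (z + s₀) (by simpa using hz) (by simpa using hzδ)
  have hps := ((p.hasFPowerSeriesOnBall ((ENNReal.ofReal_pos.2 hδ).trans_le hp)).comp_sub
    s₀).mono (ENNReal.ofReal_pos.2 hδ) hp
  rw [zero_add] at hps
  have hdiff := hps.analyticOnNhd.differentiableOn
  rw [eball_ofReal] at hdiff
  refine ⟨_, hdiff, fun s hs => ?_⟩
  have := hps.hasSum (y := s - s₀) (by simpa [eball_ofReal, dist_eq_norm] using hs)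
  simpa [p, FormalMultilinearSeries.ofScalars_apply_eq, mul_comm] using this

section PainleveII

variable {ν s₀ ε : ℂ} {U : Set ℂ} {q q' q'' h : ℂ → ℂ}

theorem eq_neg_div_sq_add_deriv_of_eq_div_add (hU : IsOpen U) (hh : DifferentiableOn ℂ h U)
    (hqh : ∀ s ∈ U, s ≠ s₀ → q s = ε / (s - s₀) + h s)
    (hq : ∀ s ∈ U, s ≠ s₀ → HasDerivAt q (q' s) s) :
    ∀ s ∈ U, s ≠ s₀ → q' s = -ε / (s - s₀) ^ 2 + deriv h s := by
  intro s hs hne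
  have hloc : q =ᶠ[𝓝 s] fun z => ε / (z - s₀) + h z :=
    mem_of_superset ((hU.sdiff isClosed_singleton).mem_nhds ⟨hs, hne⟩) fun z hz =>
      hqh z hz.1 hz.2
  have hd := ((hasDerivAt_const s ε).div ((hasDerivAt_id' s).sub_const s₀)
    (sub_ne_zero.2 hne)).add ((hh s hs).differentiableAt (hU.mem_nhds hs)).hasDerivAt
  rw [(hq s hs hne).unique (hloc.hasDerivAt_iff.2 hd)]
  ring

theorem sub_pow_four_mul_PIIHamiltonian {s h₀ h₁ : ℂ} (hs : s ≠ s₀)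
    (hq : q s = ε / (s - s₀) + h₀) (hq' : q' s = -ε / (s - s₀) ^ 2 + h₁) :
    (s - s₀) ^ 4 * PIIHamiltonian ν q q' s = ((s - s₀) ^ 2 * h₁ - ε) ^ 2
      - s * (s - s₀) ^ 2 * (ε + (s - s₀) * h₀) ^ 2 - (ε + (s - s₀) * h₀) ^ 4
      + 2 * ν * (s - s₀) ^ 3 * (ε + (s - s₀) * h₀) := by
  rw [PIIHamiltonian, hq, hq']
  field_simp [sub_ne_zero.2 hs]
  ring

theorem exists_PIIHamiltonian_eq_inv_add (hU : IsOpen U) (hs₀ : s₀ ∈ U) (hε : ε ^ 2 = 1)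
    (hh : DifferentiableOn ℂ h U)
    (hqh : ∀ s ∈ U, s ≠ s₀ → q s = ε / (s - s₀) + h s)
    (hq : ∀ s ∈ U, s ≠ s₀ → HasDerivAt q (q' s) s)
    (hq' : ∀ s ∈ U, s ≠ s₀ → HasDerivAt q' (q'' s) s)
    (hPII : ∀ s ∈ U, s ≠ s₀ → q'' s = s * q s + 2 * q s ^ 3 - ν) :
    ∃ u : ℂ → ℂ, DifferentiableOn ℂ u U ∧
      ∀ s ∈ U, s ≠ s₀ → PIIHamiltonian ν q q' s = 1 / (s - s₀) + u s := by
  have hnhds : ∀ s ∈ U, s ≠ s₀ → U \ {s₀} ∈ 𝓝 s := fun s hs hne =>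
    (hU.sdiff isClosed_singleton).mem_nhds ⟨hs, hne⟩
  have hq'h := eq_neg_div_sq_add_deriv_of_eq_div_add hU hh hqh hq
  set D : ℂ → ℂ := fun s => ((s - s₀) ^ 2 * deriv h s - ε) ^ 2
    - s * (s - s₀) ^ 2 * (ε + (s - s₀) * h s) ^ 2 - (ε + (s - s₀) * h s) ^ 4
    + 2 * ν * (s - s₀) ^ 3 * (ε + (s - s₀) * h s) - (s - s₀) ^ 3
  have hD : ∀ s ∈ U, s ≠ s₀ →
      D s = (s - s₀) ^ 4 * PIIHamiltonian ν q q' s - (s - s₀) ^ 3 := by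
    intro s hs hne
    rw [sub_pow_four_mul_PIIHamiltonian hne (hqh s hs hne) (hq'h s hs hne)]
  have hDdiff : DifferentiableOn ℂ D U := by
    have := hh.deriv hU
    fun_prop
  have hEuler : ∀ s ∈ U, s ≠ s₀ → (s - s₀) * deriv D s - (4 : ℕ) * D s =
      (s - s₀) ^ 4 * -(2 * ε * h s + (s - s₀) * h s ^ 2) := by
    intro s hs hne
    have hloc : D =ᶠ[𝓝 s] fun z => (z - s₀) ^ 4 * PIIHamiltonian ν q q' z - (z - s₀) ^ 3 :=
      mem_of_superset (hnhds s hs hne) fun z hz => hD z hz.1 hz.2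
    have hd := ((((hasDerivAt_id' s).sub_const s₀).fun_pow 4).fun_mul
      (hasDerivAt_PIIHamiltonian (hq s hs hne) (hq' s hs hne) (hPII s hs hne))).fun_sub
      (((hasDerivAt_id' s).sub_const s₀).fun_pow 3)
    have hqa : (s - s₀) ^ 2 * q s ^ 2 = (ε + (s - s₀) * h s) ^ 2 := by
      rw [hqh s hs hne]
      field_simp [sub_ne_zero.2 hne]
    rw [(hloc.hasDerivAt_iff.2 hd).deriv, hD s hs hne]
    linear_combination (-(s - s₀) ^ 3) * hqa - (s - s₀) ^ 3 * hε
  obtain ⟨u, hu, hDu⟩ := exists_eq_sub_pow_mul_of_sub_mul_deriv_sub_eq hU hs₀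
    (g := fun s => -(2 * ε * h s + (s - s₀) * h s ^ 2))
    (by have := hh.continuousOn.continuousAt (hU.mem_nhds hs₀); fun_prop) 4 hDdiff hEuler
  refine ⟨u, hu, fun s hs hne => ?_⟩
  have ht := sub_ne_zero.2 hne
  refine mul_left_cancel₀ (pow_ne_zero 4 ht) ?_
  rw [sub_eq_iff_eq_add.1 ((hD s hs hne).symm.trans (hDu s hs))]
  field_simp
  ring

end PainleveII

/-- At a simple pole `s₀` of a Painlevé II transcendent `q` with residue
`ε ∈ {1, -1}`, the Hamiltonian `H` has a simple pole with residue `1`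
(i.e. `(s - s₀)H(s) → 1`); consequently, if `ε = 1` then `H - q` extends
analytically to the full disk around `s₀`. -/
theorem PII_hamiltonian_pole (ν s₀ ε : ℂ) (δ : ℝ) (hδ : 0 < δ)
    (hε : ε = 1 ∨ ε = -1)
    (q q' q'' : ℂ → ℂ) (c : ℕ → ℂ)
    (hsum : ∀ s : ℂ, 0 < ‖s - s₀‖ → ‖s - s₀‖ < δ →
      HasSum (fun k : ℕ => c k * (s - s₀) ^ k) (q s - ε / (s - s₀)))
    (hq : ∀ s : ℂ, 0 < ‖s - s₀‖ → ‖s - s₀‖ < δ →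
      HasDerivAt q (q' s) s)
    (hq' : ∀ s : ℂ, 0 < ‖s - s₀‖ → ‖s - s₀‖ < δ →
      HasDerivAt q' (q'' s) s)
    (hPII : ∀ s : ℂ, 0 < ‖s - s₀‖ → ‖s - s₀‖ < δ →
      q'' s = s * q s + 2 * (q s) ^ 3 - ν) :
    Tendsto (fun s : ℂ => (s - s₀) * PIIHamiltonian ν q q' s)
        (nhdsWithin s₀ {s : ℂ | 0 < ‖s - s₀‖ ∧ ‖s - s₀‖ < δ})
        (nhds 1) ∧
      (ε = 1 → ∃ g : ℂ → ℂ, AnalyticOnNhd ℂ g (Metric.ball s₀ δ) ∧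
        ∀ s : ℂ, 0 < ‖s - s₀‖ → ‖s - s₀‖ < δ →
          g s = PIIHamiltonian ν q q' s - q s) := by
  have punct : ∀ s, 0 < ‖s - s₀‖ ∧ ‖s - s₀‖ < δ ↔ s ∈ ball s₀ δ ∧ s ≠ s₀ := fun s => by
    rw [mem_ball_iff_norm, norm_pos_iff, sub_ne_zero, and_comm]
  have onPunct {P : ℂ → Prop} (hP : ∀ s, 0 < ‖s - s₀‖ → ‖s - s₀‖ < δ → P s) :
      ∀ s ∈ ball s₀ δ, s ≠ s₀ → P s := fun s hs hne => ((punct s).2 ⟨hs, hne⟩).elim (hP s)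
  obtain ⟨h, hh, hhsum⟩ := exists_differentiableOn_ball_hasSum hδ fun s h₀ h₁ =>
    (hsum s h₀ h₁).summable
  have hqh : ∀ s ∈ ball s₀ δ, s ≠ s₀ → q s = ε / (s - s₀) + h s := fun s hs hne => by
    rw [← ((punct s).2 ⟨hs, hne⟩).elim (hsum s) |>.unique (hhsum s hs)]
    ring
  have hε₂ : ε ^ 2 = 1 := by rcases hε with rfl | rfl <;> norm_num
  obtain ⟨u, hu, hHu⟩ := exists_PIIHamiltonian_eq_inv_add isOpen_ball (mem_ball_self hδ) hε₂ hh
    hqh (onPunct hq) (onPunct hq') (onPunct hPII)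
  refine ⟨?_, fun hε₁ => ⟨u - h, (hu.sub hh).analyticOnNhd isOpen_ball, fun s h₀ h₁ => ?_⟩⟩
  · have hlim : Tendsto (fun s => 1 + (s - s₀) * u s) (𝓝 s₀) (𝓝 1) := by
      have := (hu.continuousOn.continuousAt (ball_mem_nhds s₀ hδ)).tendsto
      simpa using (tendsto_const_nhds.add ((tendsto_id.sub_const s₀).mul this))
    refine (tendsto_nhdsWithin_of_tendsto_nhds hlim).congr' ?_
    filter_upwards [self_mem_nhdsWithin] with s hs
    obtain ⟨hsU, hne⟩ := (punct s).1 hs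
    rw [hHu s hsU hne]
    field_simp [sub_ne_zero.2 hne]
  · obtain ⟨hsU, hne⟩ := (punct s).1 ⟨h₀, h₁⟩
    rw [Pi.sub_apply, hHu s hsU hne, hqh s hsU hne, hε₁]
    ring
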